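/- arXiv:1202.1212 — 2 statements merged into one kernel-verified Lean document; each statement's English description precedes it below -/
import Mathlib

section
/- Mean width of the sparse signal set (upper bound): there is an absolute constant C > 0 such that for all integers 1 ≤ s ≤ n, the set S_{n,s} = {x ∈ R^n : ||x||_0 ≤ s, ||x||_2 ≤ 1} satisfies w(S_{n,s})² ≤ C s log(2n/s). -/
open MeasureTheory ProbabilityTheory Real
open scoped RealInnerProductSpace NNReal ENNReal Pointwise

noncomputable def stdGaussian (n : ℕ) : Measure (EuclideanSpace ℝ (Fin n)) :=
  Measure.map (⇑(EuclideanSpace.equiv (Fin n) ℝ).symm)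
    (Measure.pi fun _ : Fin n => gaussianReal 0 1)

noncomputable def meanWidth {n : ℕ} (K : Set (EuclideanSpace ℝ (Fin n))) : ℝ :=
  ∫ g, sSup ((fun z => ⟪g, z⟫) '' (K - K)) ∂(stdGaussian n)

/-! If `x, y` lie in the sparse ball, each is supported on some `s`-set `T`, and Cauchy–Schwarz
on `T` gives `⟪g, x - y⟫ ≤ 2 max_{#T = s} ‖g_T‖`. The maximum is dominated by the soft maximum
`Y g = ∑_{#T = s} exp (‖g_T‖² / 4)`, as `‖g_T‖² ≤ 4 log (Y g)`. Jensen's inequality for `√` and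
`log` gives `𝔼 √(log Y) ≤ √(log 𝔼 Y)`, and `𝔼 Y = (n choose s) √2 ^ s` since
`𝔼 exp (γ² / 4) = √2` for a standard Gaussian `γ`. Hence
`w² ≤ 16 log ((n choose s) √2 ^ s) ≤ 16 s (1 + log (n / s) + log 2 / 2) ≤ 32 s log (2 n / s)`. -/

section Jensen

variable {α : Type*} [MeasurableSpace α] {μ : Measure α}

lemma MeasureTheory.Integrable.sqrt [IsFiniteMeasure μ] {f : α → ℝ} (hf : Integrable f μ)
    (hf0 : ∀ᵐ x ∂μ, 0 ≤ f x) : Integrable (fun x => √(f x)) μ := by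
  refine ((integrable_const 1).add hf).mono
    hf.aestronglyMeasurable.aemeasurable.sqrt.aestronglyMeasurable ?_
  filter_upwards [hf0] with x hx
  rw [Pi.add_apply, norm_of_nonneg (sqrt_nonneg _), norm_of_nonneg (by positivity)]
  exact sqrt_le_iff.2 ⟨by positivity, by nlinarith⟩

lemma MeasureTheory.Integrable.log_of_one_le {Y : α → ℝ} (hY : Integrable Y μ)
    (hY1 : ∀ᵐ x ∂μ, 1 ≤ Y x) : Integrable (fun x => log (Y x)) μ := by
  refine hY.mono hY.aestronglyMeasurable.aemeasurable.log.aestronglyMeasurable ?_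
  filter_upwards [hY1] with x hx
  rw [norm_of_nonneg (log_nonneg hx), norm_of_nonneg (by linarith)]
  exact log_le_self (by linarith)

variable [IsProbabilityMeasure μ]

lemma integral_log_le_log_integral {Y : α → ℝ} (hY : Integrable Y μ) (hpos : ∀ᵐ x ∂μ, 0 < Y x)
    (hlog : Integrable (fun x => log (Y x)) μ) :
    ∫ x, log (Y x) ∂μ ≤ log (∫ x, Y x ∂μ) := by
  have hY_eq : (fun x => exp (log (Y x))) =ᵐ[μ] Y := hpos.mono fun x hx => exp_log hx
  have hjensen : exp (∫ x, log (Y x) ∂μ) ≤ ∫ x, Y x ∂μ := by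
    rw [← integral_congr_ae hY_eq]
    exact convexOn_exp.map_integral_le continuousOn_exp isClosed_univ (by simp) hlog
      (hY.congr hY_eq.symm)
  exact (le_log_iff_exp_le ((exp_pos _).trans_le hjensen)).2 hjensen

lemma integral_sqrt_le_sqrt_integral {f : α → ℝ} (hf : Integrable f μ)
    (hf0 : ∀ᵐ x ∂μ, 0 ≤ f x) : ∫ x, √(f x) ∂μ ≤ √(∫ x, f x ∂μ) :=
  strictConcaveOn_sqrt.concaveOn.le_map_integral continuous_sqrt.continuousOn isClosed_Ici hf0 hf
    (hf.sqrt hf0)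

lemma integral_sqrt_log_le_sqrt_log_integral {Y : α → ℝ} (hY : Integrable Y μ)
    (hY1 : ∀ᵐ x ∂μ, 1 ≤ Y x) :
    ∫ x, √(log (Y x)) ∂μ ≤ √(log (∫ x, Y x ∂μ)) := by
  have hlog := hY.log_of_one_le hY1
  calc ∫ x, √(log (Y x)) ∂μ ≤ √(∫ x, log (Y x) ∂μ) :=
        integral_sqrt_le_sqrt_integral hlog (hY1.mono fun x hx => log_nonneg hx)
    _ ≤ √(log (∫ x, Y x ∂μ)) :=
        sqrt_le_sqrt (integral_log_le_log_integral hY (hY1.mono fun x hx => by linarith) hlog)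

end Jensen

section Gaussian

lemma gaussianPDFReal_mul_exp_mul_sq (t x : ℝ) :
    gaussianPDFReal 0 1 x * exp (t * x ^ 2) = (√(2 * π))⁻¹ * exp (-(1 / 2 - t) * x ^ 2) := by
  rw [gaussianPDFReal, mul_assoc, ← exp_add, NNReal.coe_one, mul_one]
  ring_nf

lemma integrable_exp_mul_sq_gaussianReal {t : ℝ} (ht : t < 1 / 2) :
    Integrable (fun x => exp (t * x ^ 2)) (gaussianReal 0 1) := by
  rw [gaussianReal_of_var_ne_zero _ one_ne_zero, integrable_withDensity_iff_integrable_smul'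
    (measurable_gaussianPDF 0 1) (ae_of_all _ fun _ => gaussianPDF_lt_top)]
  simp only [toReal_gaussianPDF, smul_eq_mul, gaussianPDFReal_mul_exp_mul_sq]
  exact (integrable_exp_neg_mul_sq (by linarith)).const_mul _

-- For `t ≥ 1 / 2` both sides are junk zeros.
lemma integral_exp_mul_sq_gaussianReal (t : ℝ) :
    ∫ x, exp (t * x ^ 2) ∂gaussianReal 0 1 = (√(1 - 2 * t))⁻¹ := by
  rw [integral_gaussianReal_eq_integral_smul one_ne_zero]
  simp only [smul_eq_mul, gaussianPDFReal_mul_exp_mul_sq]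
  have h2π : √(2 * π) ≠ 0 := by positivity
  rw [integral_const_mul, integral_gaussian,
    show π / (1 / 2 - t) = 2 * π / (1 - 2 * t) by field_simp, sqrt_div (by positivity)]
  field_simp

end Gaussian

section ProductGaussian

variable {ι : Type*} [Fintype ι]

lemma exp_mul_sum_sq_eq_prod [DecidableEq ι] (t : ℝ) (T : Finset ι) (x : ι → ℝ) :
    exp (t * ∑ i ∈ T, x i ^ 2) = ∏ i, if i ∈ T then exp (t * x i ^ 2) else 1 := by
  rw [Finset.prod_ite_mem, Finset.univ_inter, Finset.mul_sum, exp_sum]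

lemma integrable_exp_mul_sum_sq_pi_gaussianReal {t : ℝ} (ht : t < 1 / 2) (T : Finset ι) :
    Integrable (fun x : ι → ℝ => exp (t * ∑ i ∈ T, x i ^ 2))
      (Measure.pi fun _ => gaussianReal 0 1) := by
  classical
  simp only [exp_mul_sum_sq_eq_prod]
  refine Integrable.fintype_prod (f := fun i y => if i ∈ T then exp (t * y ^ 2) else 1)
    fun i => ?_
  split_ifs
  · exact integrable_exp_mul_sq_gaussianReal ht
  · exact integrable_const 1

lemma integral_exp_mul_sum_sq_pi_gaussianReal (t : ℝ) (T : Finset ι) :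
    ∫ x : ι → ℝ, exp (t * ∑ i ∈ T, x i ^ 2) ∂(Measure.pi fun _ => gaussianReal 0 1) =
      (√(1 - 2 * t))⁻¹ ^ T.card := by
  classical
  simp only [exp_mul_sum_sq_eq_prod]
  rw [integral_fintype_prod_eq_prod (fun i y => if i ∈ T then exp (t * y ^ 2) else 1)]
  have hfactor (i : ι) : ∫ y, (if i ∈ T then exp (t * y ^ 2) else 1) ∂gaussianReal 0 1 =
      if i ∈ T then (√(1 - 2 * t))⁻¹ else 1 := by
    split_ifs <;> simp [integral_exp_mul_sq_gaussianReal]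
  simp only [hfactor, Finset.prod_ite_mem, Finset.univ_inter, Finset.prod_const]

end ProductGaussian

instance isProbabilityMeasure_stdGaussian (n : ℕ) : IsProbabilityMeasure (_root_.stdGaussian n) :=
  Measure.isProbabilityMeasure_map (by fun_prop)

lemma measurableEmbedding_euclideanSpace_equiv_symm (n : ℕ) :
    MeasurableEmbedding (EuclideanSpace.equiv (Fin n) ℝ).symm :=
  (EuclideanSpace.equiv (Fin n) ℝ).symm.toHomeomorph.measurableEmbedding

lemma integrable_stdGaussian_iff {n : ℕ} {F : EuclideanSpace ℝ (Fin n) → ℝ} :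
    Integrable F (_root_.stdGaussian n) ↔
      Integrable (fun x => F ((EuclideanSpace.equiv (Fin n) ℝ).symm x))
        (Measure.pi fun _ => gaussianReal 0 1) :=
  (measurableEmbedding_euclideanSpace_equiv_symm n).integrable_map_iff

lemma integral_stdGaussian {n : ℕ} (F : EuclideanSpace ℝ (Fin n) → ℝ) :
    ∫ g, F g ∂_root_.stdGaussian n =
      ∫ x, F ((EuclideanSpace.equiv (Fin n) ℝ).symm x) ∂(Measure.pi fun _ => gaussianReal 0 1) :=
  (measurableEmbedding_euclideanSpace_equiv_symm n).integral_map F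

section Sparse

open Finset

variable {ι : Type*} [Fintype ι]

def sparseBall (ι : Type*) [Fintype ι] (s : ℕ) : Set (EuclideanSpace ℝ ι) :=
  {x | #{j | x j ≠ 0} ≤ s ∧ ‖x‖ ≤ 1}

lemma zero_mem_sparseBall (s : ℕ) : (0 : EuclideanSpace ℝ ι) ∈ sparseBall ι s := by
  simp [sparseBall]

lemma exists_card_eq_of_mem_sparseBall {s : ℕ} {x : EuclideanSpace ℝ ι}
    (hx : x ∈ sparseBall ι s) (hs : s ≤ Fintype.card ι) :
    ∃ T : Finset ι, #T = s ∧ ∀ i ∉ T, x i = 0 := by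
  obtain ⟨T, hsupp, -, hT⟩ := exists_subsuperset_card_eq (subset_univ _) hx.1 (by simpa)
  exact ⟨T, hT, fun i hi => by_contra fun hxi => hi (hsupp (by simpa using hxi))⟩

lemma abs_inner_le_sqrt_sum_sq_mul_norm {T : Finset ι} {g z : EuclideanSpace ℝ ι}
    (hz : ∀ i ∉ T, z i = 0) : |⟪g, z⟫| ≤ √(∑ i ∈ T, g i ^ 2) * ‖z‖ := by
  have hinner : ⟪g, z⟫ = ∑ i ∈ T, g i * z i := by
    rw [PiLp.inner_apply]
    refine (sum_subset (subset_univ T) fun i _ hi => by simp [hz i hi]).symm.trans ?_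
    simp [mul_comm]
  have hnorm : √(∑ i ∈ T, z i ^ 2) ≤ ‖z‖ := by
    rw [EuclideanSpace.norm_eq]
    exact sqrt_le_sqrt (by simpa using sum_le_univ_sum_of_nonneg fun i => sq_nonneg (z i))
  calc |⟪g, z⟫| ≤ ∑ i ∈ T, |g i| * |z i| := by
        simpa only [hinner, abs_mul] using abs_sum_le_sum_abs (fun i => g i * z i) T
    _ ≤ √(∑ i ∈ T, |g i| ^ 2) * √(∑ i ∈ T, |z i| ^ 2) := sum_mul_le_sqrt_mul_sqrt T _ _
    _ ≤ √(∑ i ∈ T, g i ^ 2) * ‖z‖ := by simp only [sq_abs]; gcongr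

noncomputable def sparseExpSum (s : ℕ) (g : EuclideanSpace ℝ ι) : ℝ :=
  ∑ T ∈ powersetCard s univ, exp (4⁻¹ * ∑ i ∈ T, g i ^ 2)

lemma exp_le_sparseExpSum {s : ℕ} {T : Finset ι} (hT : #T = s) (g : EuclideanSpace ℝ ι) :
    exp (4⁻¹ * ∑ i ∈ T, g i ^ 2) ≤ sparseExpSum s g :=
  single_le_sum (f := fun T => exp (4⁻¹ * ∑ i ∈ T, g i ^ 2)) (fun _ _ => (exp_pos _).le)
    (mem_powersetCard_univ.2 hT)

lemma one_le_sparseExpSum {s : ℕ} (hs : s ≤ Fintype.card ι) (g : EuclideanSpace ℝ ι) :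
    1 ≤ sparseExpSum s g := by
  obtain ⟨T, -, hT⟩ := exists_subset_card_eq (s := univ) (by simpa)
  exact (one_le_exp (by positivity)).trans (exp_le_sparseExpSum hT g)

lemma abs_inner_le_of_mem_sparseBall {s : ℕ} (hs : s ≤ Fintype.card ι) {x : EuclideanSpace ℝ ι}
    (hx : x ∈ sparseBall ι s) (g : EuclideanSpace ℝ ι) :
    |⟪g, x⟫| ≤ 2 * √(log (sparseExpSum s g)) := by
  obtain ⟨T, hT, hxT⟩ := exists_card_eq_of_mem_sparseBall hx hs
  have hlog : 4⁻¹ * ∑ i ∈ T, g i ^ 2 ≤ log (sparseExpSum s g) :=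
    (le_log_iff_exp_le (by linarith [one_le_sparseExpSum hs g])).2 (exp_le_sparseExpSum hT g)
  calc |⟪g, x⟫| ≤ √(∑ i ∈ T, g i ^ 2) * ‖x‖ := abs_inner_le_sqrt_sum_sq_mul_norm hxT
    _ ≤ √(4 * log (sparseExpSum s g)) * 1 :=
        mul_le_mul (sqrt_le_sqrt (by linarith)) hx.2 (norm_nonneg _) (sqrt_nonneg _)
    _ = 2 * √(log (sparseExpSum s g)) := by
        rw [sqrt_mul zero_le_four, show (4 : ℝ) = 2 ^ 2 by norm_num, sqrt_sq zero_le_two, mul_one]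

end Sparse

lemma integrable_exp_mul_sum_sq_stdGaussian {n : ℕ} {t : ℝ} (ht : t < 1 / 2)
    (T : Finset (Fin n)) :
    Integrable (fun g : EuclideanSpace ℝ (Fin n) => exp (t * ∑ i ∈ T, g i ^ 2))
      (_root_.stdGaussian n) :=
  integrable_stdGaussian_iff.2 (integrable_exp_mul_sum_sq_pi_gaussianReal ht T)

lemma integral_exp_mul_sum_sq_stdGaussian {n : ℕ} (t : ℝ) (T : Finset (Fin n)) :
    ∫ g, exp (t * ∑ i ∈ T, g i ^ 2) ∂(_root_.stdGaussian n) = (√(1 - 2 * t))⁻¹ ^ T.card := by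
  rw [integral_stdGaussian]
  exact integral_exp_mul_sum_sq_pi_gaussianReal t T

lemma integrable_sparseExpSum (n s : ℕ) : Integrable (sparseExpSum s) (_root_.stdGaussian n) :=
  integrable_finsetSum _ fun T _ => integrable_exp_mul_sum_sq_stdGaussian (by norm_num) T

lemma integral_sparseExpSum (n s : ℕ) :
    ∫ g, sparseExpSum s g ∂(_root_.stdGaussian n) = n.choose s * √2 ^ s := by
  have hmoment : (√(1 - 2 * 4⁻¹ : ℝ))⁻¹ = √2 := by
    rw [← sqrt_inv]; norm_num
  unfold sparseExpSum
  rw [integral_finsetSum _ fun T _ => integrable_exp_mul_sum_sq_stdGaussian (by norm_num) T,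
    Finset.sum_congr rfl fun T hT => by
      rw [integral_exp_mul_sum_sq_stdGaussian, hmoment, Finset.mem_powersetCard_univ.1 hT]]
  simp

section MeanWidth

section InnerProductSpace

variable {E : Type*} [NormedAddCommGroup E] [InnerProductSpace ℝ E] {K : Set E}

lemma sSup_inner_sub_nonneg (hK : K.Nonempty) (g : E) :
    0 ≤ sSup ((fun z => ⟪g, z⟫) '' (K - K)) := by
  obtain ⟨x, hx⟩ := hK
  exact Real.sSup_nonneg' ⟨0, ⟨x - x, Set.sub_mem_sub hx hx, by simp⟩, le_rfl⟩

lemma sSup_inner_sub_le (hK : K.Nonempty) {g : E} {b : ℝ} (hb : ∀ x ∈ K, |⟪g, x⟫| ≤ b) :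
    sSup ((fun z => ⟪g, z⟫) '' (K - K)) ≤ 2 * b := by
  obtain ⟨x, hx⟩ := hK
  refine csSup_le ⟨_, x - x, Set.sub_mem_sub hx hx, rfl⟩ ?_
  rintro _ ⟨_, ⟨u, hu, v, hv, rfl⟩, rfl⟩
  change ⟪g, u - v⟫ ≤ 2 * b
  rw [inner_sub_right]
  linarith [(abs_le.1 (hb u hu)).2, (abs_le.1 (hb v hv)).1]

end InnerProductSpace

variable {n : ℕ} {K : Set (EuclideanSpace ℝ (Fin n))}

lemma meanWidth_nonneg (hK : K.Nonempty) : 0 ≤ meanWidth K :=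
  integral_nonneg (sSup_inner_sub_nonneg hK)

lemma meanWidth_le_two_mul_integral (hK : K.Nonempty) {b : EuclideanSpace ℝ (Fin n) → ℝ}
    (hb_int : Integrable b (_root_.stdGaussian n)) (hb : ∀ g, ∀ x ∈ K, |⟪g, x⟫| ≤ b g) :
    meanWidth K ≤ 2 * ∫ g, b g ∂(_root_.stdGaussian n) := by
  rw [← integral_const_mul]
  exact integral_mono_of_nonneg (ae_of_all _ (sSup_inner_sub_nonneg hK)) (hb_int.const_mul 2)
    (ae_of_all _ fun g => sSup_inner_sub_le hK (hb g))

end MeanWidth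

lemma log_choose_le {n s : ℕ} (hs : 0 < s) (hsn : s ≤ n) :
    log (n.choose s) ≤ s * (1 + log (n / s)) := by
  have hs' : (0 : ℝ) < s := by exact_mod_cast hs
  have hn : (0 : ℝ) < n := by exact_mod_cast hs.trans_le hsn
  have hchoose : (n.choose s : ℝ) ≤ (n / s) ^ s * exp s :=
    calc (n.choose s : ℝ) ≤ n ^ s / s.factorial := Nat.choose_le_pow_div s n
      _ = (n / s) ^ s * (s ^ s / s.factorial) := by rw [div_pow]; field_simp
      _ ≤ (n / s) ^ s * exp s := by gcongr; exact pow_div_factorial_le_exp _ hs'.le s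
  calc log (n.choose s) ≤ log ((n / s) ^ s * exp s) :=
        log_le_log (by exact_mod_cast Nat.choose_pos hsn) hchoose
    _ = s * (1 + log (n / s)) := by
        rw [log_mul (by positivity) (exp_ne_zero _), log_pow, log_exp]; ring

lemma log_choose_mul_sqrt_two_pow_le {n s : ℕ} (hs : 0 < s) (hsn : s ≤ n) :
    log (n.choose s * √2 ^ s) ≤ 2 * s * log (2 * n / s) := by
  have hs' : (0 : ℝ) < s := by exact_mod_cast hs
  have hn : (0 : ℝ) < n := by exact_mod_cast hs.trans_le hsn
  have hratio : 0 ≤ log (n / s) :=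
    log_nonneg ((one_le_div hs').2 (by exact_mod_cast hsn))
  have hlog2 := log_two_gt_d9
  rw [log_mul (by exact_mod_cast (Nat.choose_pos hsn).ne') (by positivity), log_pow,
    log_sqrt zero_le_two, mul_div_assoc, log_mul two_ne_zero (by positivity)]
  nlinarith [log_choose_le hs hsn]

lemma meanWidth_sparseBall_le {n s : ℕ} (hsn : s ≤ n) :
    meanWidth (sparseBall (Fin n) s) ≤ 4 * √(log (n.choose s * √2 ^ s)) := by
  have hs_card : s ≤ Fintype.card (Fin n) := by simpa using hsn
  have hY := integrable_sparseExpSum n s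
  have hY1 : ∀ g, 1 ≤ sparseExpSum s g := one_le_sparseExpSum hs_card
  calc meanWidth (sparseBall (Fin n) s)
      ≤ 2 * ∫ g, 2 * √(log (sparseExpSum s g)) ∂(_root_.stdGaussian n) :=
        meanWidth_le_two_mul_integral ⟨0, zero_mem_sparseBall s⟩
          (((hY.log_of_one_le (ae_of_all _ hY1)).sqrt
            (ae_of_all _ fun g => log_nonneg (hY1 g))).const_mul 2)
          fun g _ hx => abs_inner_le_of_mem_sparseBall hs_card hx g
    _ = 4 * ∫ g, √(log (sparseExpSum s g)) ∂(_root_.stdGaussian n) := by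
        rw [integral_const_mul]; ring
    _ ≤ 4 * √(log (n.choose s * √2 ^ s)) := by
        rw [← integral_sparseExpSum n s]
        gcongr
        exact integral_sqrt_log_le_sqrt_log_integral hY (ae_of_all _ hY1)

theorem meanWidth_sparse_set :
    ∃ C : ℝ, 0 < C ∧ ∀ n s : ℕ, 1 ≤ s → s ≤ n →
      meanWidth {x : EuclideanSpace ℝ (Fin n) |
          (Finset.univ.filter fun j => x j ≠ 0).card ≤ s ∧ ‖x‖ ≤ 1} ^ 2 ≤
        C * s * Real.log (2 * n / s) := by
  refine ⟨32, by norm_num, fun n s hs hsn => ?_⟩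
  have hmoment : 1 ≤ (n.choose s : ℝ) * √2 ^ s := one_le_mul_of_one_le_of_one_le
    (by exact_mod_cast Nat.choose_pos hsn) (one_le_pow₀ (one_le_sqrt.2 one_le_two))
  calc meanWidth (sparseBall (Fin n) s) ^ 2 ≤ (4 * √(log (n.choose s * √2 ^ s))) ^ 2 :=
        pow_le_pow_left₀ (meanWidth_nonneg ⟨0, zero_mem_sparseBall s⟩)
          (meanWidth_sparseBall_le hsn) 2
    _ = 16 * log (n.choose s * √2 ^ s) := by
        rw [mul_pow, sq_sqrt (log_nonneg hmoment)]; norm_num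
    _ ≤ 32 * s * log (2 * n / s) := by
        linarith [log_choose_mul_sqrt_two_pow_le hs hsn]
end

section
/- Logistic correlation coefficient lower bound: let g be a standard normal random variable and α > 0. For θ(z) = tanh(αz/2) (the correlation function arising from the logistic model with signal of Euclidean norm α), one has λ = E[θ(g) g] = (α/2) E[sech²(αg/2)] ≥ (1/6) min(α, 1). -/
/-!
By Gaussian integration by parts, `E[tanh(αg/2) g] = (α/2) E[sech²(αg/2)]`. Since `tanh` is
increasing, `c ↦ E[tanh(c g) g]` is monotone, so it suffices to bound it at `c = min α 1 / 2`.
There `sech² y ≥ 1 - y²` (as `|tanh y| ≤ |y|`) and `E[g²] = 1` give the lower bound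
`c (1 - c²) ≥ 3c/4`.
-/

open MeasureTheory ProbabilityTheory Real
open scoped NNReal

namespace Real

lemma one_sub_tanh_sq (x : ℝ) : 1 - tanh x ^ 2 = (1 / cosh x) ^ 2 := by
  have := cosh_pos x
  rw [tanh_eq_sinh_div_cosh]
  field_simp
  linear_combination cosh_sq_sub_sinh_sq x

lemma hasDerivAt_tanh (x : ℝ) : HasDerivAt tanh (1 - tanh x ^ 2) x := by
  have h := (hasDerivAt_sinh x).div (hasDerivAt_cosh x) (cosh_pos x).ne'
  rw [show tanh = sinh / cosh from funext tanh_eq_sinh_div_cosh]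
  refine h.congr_deriv ?_
  have := cosh_pos x
  simp only [Pi.div_apply]
  field_simp

@[fun_prop]
lemma continuous_tanh : Continuous tanh :=
  continuous_iff_continuousAt.2 fun x => (hasDerivAt_tanh x).continuousAt

lemma tanh_strictMono : StrictMono tanh :=
  strictMono_of_deriv_pos fun x => by
    rw [(hasDerivAt_tanh x).deriv, sub_pos]; exact tanh_sq_lt_one x

lemma tanh_le_self {x : ℝ} (hx : 0 ≤ x) : tanh x ≤ x := by
  have hderiv (y : ℝ) : HasDerivAt (fun y => y - tanh y) (tanh y ^ 2) y :=
    ((hasDerivAt_id' y).sub (hasDerivAt_tanh y)).congr_deriv (sub_sub_cancel _ _)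
  have hmono : Monotone fun y => y - tanh y :=
    monotone_of_deriv_nonneg (fun y => (hderiv y).differentiableAt)
      fun y => (hderiv y).deriv ▸ sq_nonneg _
  simpa [tanh_zero] using hmono hx

lemma abs_tanh_le_abs (x : ℝ) : |tanh x| ≤ |x| := by
  rcases le_total 0 x with hx | hx
  · rw [abs_of_nonneg hx, abs_of_nonneg (tanh_zero ▸ tanh_strictMono.monotone hx)]
    exact tanh_le_self hx
  · rw [abs_of_nonpos hx, abs_of_nonpos (tanh_zero ▸ tanh_strictMono.monotone hx), ← tanh_neg]
    exact tanh_le_self (neg_nonneg.2 hx)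

lemma one_sub_sq_le_sech_sq (x : ℝ) : 1 - x ^ 2 ≤ (1 / cosh x) ^ 2 := by
  rw [← one_sub_tanh_sq, sub_le_sub_iff_left, sq_le_sq]
  exact abs_tanh_le_abs x

end Real

lemma Monotone.apply_mul_mul_le_apply_mul_mul {g : ℝ → ℝ} (hg : Monotone g) {a b : ℝ}
    (hab : a ≤ b) (s : ℝ) : g (a * s) * s ≤ g (b * s) * s := by
  rcases le_total 0 s with hs | hs
  · exact mul_le_mul_of_nonneg_right (hg (mul_le_mul_of_nonneg_right hab hs)) hs
  · exact mul_le_mul_of_nonpos_right (hg (mul_le_mul_of_nonpos_right hab hs)) hs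

namespace ProbabilityTheory

lemma hasDerivAt_gaussianPDFReal (μ : ℝ) (v : ℝ≥0) (x : ℝ) :
    HasDerivAt (gaussianPDFReal μ v) (-((x - μ) / v) * gaussianPDFReal μ v x) x := by
  have h : HasDerivAt (fun y => -(y - μ) ^ 2 / (2 * v)) (-((x - μ) / v)) x := by
    refine (((hasDerivAt_id' x).sub_const μ).pow 2).neg.div_const (2 * (v : ℝ)) |>.congr_deriv ?_
    rcases eq_or_ne (v : ℝ) 0 with hv | hv
    · simp [hv]
    · field_simp; ring
  rw [gaussianPDFReal_def]
  exact (h.exp.const_mul (√(2 * π * v))⁻¹).congr_deriv (by ring)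

lemma integrable_gaussianReal_iff {μ : ℝ} {v : ℝ≥0} (hv : v ≠ 0) {f : ℝ → ℝ} :
    Integrable f (gaussianReal μ v) ↔ Integrable (fun x => gaussianPDFReal μ v x * f x) := by
  rw [gaussianReal_of_var_ne_zero μ hv, integrable_withDensity_iff_integrable_smul'
    (measurable_gaussianPDF μ v) (ae_of_all _ fun _ => gaussianPDF_lt_top)]
  simp [toReal_gaussianPDF]

/-- Stein's lemma (Gaussian integration by parts). -/
theorem integral_mul_sub_gaussianReal {μ : ℝ} {v : ℝ≥0} {f f' : ℝ → ℝ}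
    (hf : ∀ x, HasDerivAt f (f' x) x) (hfi : Integrable f (gaussianReal μ v))
    (hfx : Integrable (fun x => f x * (x - μ)) (gaussianReal μ v))
    (hf'i : Integrable f' (gaussianReal μ v)) :
    ∫ x, f x * (x - μ) ∂gaussianReal μ v = v * ∫ x, f' x ∂gaussianReal μ v := by
  rcases eq_or_ne v 0 with rfl | hv
  · simp [gaussianReal_zero_var]
  set φ := gaussianPDFReal μ v
  rw [integral_gaussianReal_eq_integral_smul hv, integral_gaussianReal_eq_integral_smul hv]
  rw [integrable_gaussianReal_iff hv] at hfi hfx hf'i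
  simp only [smul_eq_mul]
  have hF (x : ℝ) :
      HasDerivAt (fun y => f y * φ y) (φ x * f' x - φ x * (f x * (x - μ)) / v) x :=
    ((hf x).mul (hasDerivAt_gaussianPDFReal μ v x)).congr_deriv (by ring)
  have h := integral_eq_zero_of_hasDerivAt_of_integrable hF (hf'i.sub (hfx.div_const v))
    (hfi.congr (ae_of_all _ fun x => mul_comm _ _))
  rw [integral_sub hf'i (hfx.div_const v), integral_div, sub_eq_zero] at h
  have hv' : (v : ℝ) ≠ 0 := by exact_mod_cast hv
  rw [h]
  field_simp

lemma integral_sub_sq_gaussianReal (μ : ℝ) (v : ℝ≥0) :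
    ∫ x, (x - μ) ^ 2 ∂gaussianReal μ v = v := by
  have := variance_fun_id_gaussianReal (μ := μ) (v := v)
  rw [variance_eq_integral measurable_id'.aemeasurable] at this
  simpa [integral_id_gaussianReal] using this

end ProbabilityTheory

lemma integrable_tanh_mul_gaussianReal (c : ℝ) :
    Integrable (fun s => tanh (c * s) * s) (gaussianReal 0 1) := by
  refine ((memLp_id_gaussianReal 1).integrable le_rfl).norm.mono' (by fun_prop)
    (ae_of_all _ fun s => ?_)
  rw [norm_mul, id, norm_eq_abs (tanh _)]
  exact mul_le_of_le_one_left (norm_nonneg s) (abs_tanh_lt_one _).le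

lemma integrable_sech_sq_gaussianReal (c : ℝ) :
    Integrable (fun s => (1 / cosh (c * s)) ^ 2) (gaussianReal 0 1) := by
  refine Integrable.of_bound (by simp_rw [← one_sub_tanh_sq]; fun_prop) 1
    (ae_of_all _ fun s => ?_)
  rw [← one_sub_tanh_sq, norm_of_nonneg (sub_nonneg.2 (tanh_sq_lt_one _).le)]
  exact sub_le_self _ (sq_nonneg _)

theorem integral_tanh_mul_gaussianReal (c : ℝ) :
    ∫ s, tanh (c * s) * s ∂gaussianReal 0 1 =
      c * ∫ s, (1 / cosh (c * s)) ^ 2 ∂gaussianReal 0 1 := by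
  have hderiv (s : ℝ) : HasDerivAt (fun s => tanh (c * s)) (c * (1 / cosh (c * s)) ^ 2) s :=
    ((hasDerivAt_tanh (c * s)).comp s ((hasDerivAt_id' s).const_mul c)).congr_deriv
      (by rw [one_sub_tanh_sq]; ring)
  have htanh : Integrable (fun s => tanh (c * s)) (gaussianReal 0 1) :=
    Integrable.of_bound (by fun_prop) 1 (ae_of_all _ fun s => (abs_tanh_lt_one _).le)
  have := integral_mul_sub_gaussianReal hderiv htanh
    (by simpa using integrable_tanh_mul_gaussianReal c)
    ((integrable_sech_sq_gaussianReal c).const_mul c)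
  simpa [integral_const_mul] using this

lemma monotone_integral_tanh_mul_gaussianReal :
    Monotone fun c => ∫ s, tanh (c * s) * s ∂gaussianReal 0 1 := fun a b hab =>
  integral_mono (integrable_tanh_mul_gaussianReal a) (integrable_tanh_mul_gaussianReal b)
    (tanh_strictMono.monotone.apply_mul_mul_le_apply_mul_mul hab)

lemma mul_one_sub_sq_le_integral_tanh_mul_gaussianReal {c : ℝ} (hc : 0 ≤ c) :
    c * (1 - c ^ 2) ≤ ∫ s, tanh (c * s) * s ∂gaussianReal 0 1 := by
  have hsq : Integrable (fun s => s ^ 2) (gaussianReal 0 1) :=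
    (memLp_id_gaussianReal 2).integrable_sq
  have hquad : Integrable (fun s => 1 - (c * s) ^ 2) (gaussianReal 0 1) := by
    simp_rw [mul_pow]; exact (integrable_const 1).sub (hsq.const_mul _)
  have hmoment : ∫ s, (1 - (c * s) ^ 2) ∂gaussianReal 0 1 = 1 - c ^ 2 := by
    simp_rw [mul_pow]
    have hvar : ∫ s, s ^ 2 ∂gaussianReal 0 1 = 1 := by
      simpa using integral_sub_sq_gaussianReal 0 1
    rw [integral_sub (integrable_const 1) (hsq.const_mul _), integral_const_mul, hvar]
    simp
  rw [integral_tanh_mul_gaussianReal, ← hmoment]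
  exact mul_le_mul_of_nonneg_left (integral_mono hquad (integrable_sech_sq_gaussianReal c)
    fun s => one_sub_sq_le_sech_sq (c * s)) hc

theorem logistic_correlation_lower_bound (α : ℝ) (hα : 0 < α) :
    (∫ s, Real.tanh (α * s / 2) * s ∂(gaussianReal 0 1)) =
      α / 2 * ∫ s, (1 / Real.cosh (α * s / 2)) ^ 2 ∂(gaussianReal 0 1) ∧
    min α 1 / 6 ≤ ∫ s, Real.tanh (α * s / 2) * s ∂(gaussianReal 0 1) := by
  simp_rw [mul_div_right_comm α _ 2]
  refine ⟨integral_tanh_mul_gaussianReal (α / 2), ?_⟩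
  set β := min α 1
  have hβ : 0 < β := lt_min hα one_pos
  have hβ1 : β ≤ 1 := min_le_right α 1
  calc β / 6 ≤ β / 2 * (1 - (β / 2) ^ 2) := by nlinarith
    _ ≤ ∫ s, tanh (β / 2 * s) * s ∂gaussianReal 0 1 :=
      mul_one_sub_sq_le_integral_tanh_mul_gaussianReal (by positivity)
    _ ≤ ∫ s, tanh (α / 2 * s) * s ∂gaussianReal 0 1 :=
      monotone_integral_tanh_mul_gaussianReal (by linarith [min_le_left α 1])
end
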